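/- Let 1 ≤ p,q ≤ n and let W, V ∈ L²(P) be degenerate U-statistics of orders p and q, respectively, with respect to the same independent sequence X_1,…,X_n, with Hoeffding components W_J (J ∈ 𝓓_p) and V_K (K ∈ 𝓓_q). If J ∈ 𝓓_p, K ∈ 𝓓_q and L ⊆ [n] are such that the symmetric difference J Δ K = (J∖K) ∪ (K∖J) is not contained in L, then E[W_J V_K | 𝓕_L] = 0 almost surely. -/

import Mathlib

open MeasureTheory ProbabilityTheory Finset Filter

noncomputable section

/-- The σ-algebra generated by the random variables `X j`, `j ∈ J`. -/
def sigmaGen {Ω : Type*} {n : ℕ} {E : Fin n → Type*} [∀ i, MeasurableSpace (E i)]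
    (X : ∀ i, Ω → E i) (J : Finset (Fin n)) : MeasurableSpace Ω :=
  ⨆ i ∈ J, MeasurableSpace.comap (X i) inferInstance

/-- The Hoeffding component of `W` indexed by `J`:
`W_J = ∑_{L ⊆ J} (-1)^{|J|-|L|} E[W | 𝓕_L]`. -/
noncomputable def hoeff {Ω : Type*} [MeasurableSpace Ω] {n : ℕ} {E : Fin n → Type*}
    [∀ i, MeasurableSpace (E i)] (μ : Measure Ω) (X : ∀ i, Ω → E i)
    (W : Ω → ℝ) (J : Finset (Fin n)) : Ω → ℝ :=
  ∑ L ∈ J.powerset, ((-1 : ℝ) ^ (J.card - L.card)) • μ[W | sigmaGen X L]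

/-- The collection `𝓓_d` of all `d`-subsets of `{1,…,n}`. -/
def DD (n d : ℕ) : Finset (Finset (Fin n)) :=
  Finset.univ.filter fun J => J.card = d

/-- `W` is a degenerate U-statistic of order `d` (w.r.t. the data `X`): its Hoeffding
decomposition is `W = ∑_{J ∈ 𝓓_d} W_J`. -/
def IsDegenUStat {Ω : Type*} [MeasurableSpace Ω] {n : ℕ} {E : Fin n → Type*}
    [∀ i, MeasurableSpace (E i)] (μ : Measure Ω) (X : ∀ i, Ω → E i)
    (W : Ω → ℝ) (d : ℕ) : Prop :=
  W =ᵐ[μ] fun ω => ∑ J ∈ DD n d, hoeff μ X W J ω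

/-- The influence quantity `ρ_n² = max_{1 ≤ i ≤ n} ∑_{J ∈ 𝓓_d, i ∈ J} Var(W_J)`. -/
noncomputable def rho2 {Ω : Type*} [MeasurableSpace Ω] {n : ℕ} {E : Fin n → Type*}
    [∀ i, MeasurableSpace (E i)] (μ : Measure Ω) (X : ∀ i, Ω → E i)
    (W : Ω → ℝ) (d : ℕ) : ℝ :=
  ⨆ i : Fin n, ∑ J ∈ (DD n d).filter (fun J => i ∈ J), variance (hoeff μ X W J) μ

/-! Conditioning on the σ-algebras `𝓕_A` of independent coordinates composes by intersection,
`E[E[W | 𝓕_A] | 𝓕_B] = E[W | 𝓕_{A ∩ B}]`: writing `𝓕_B = 𝓕_{A ∩ B} ⊔ 𝓕_{B \ A}`, the part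
`𝓕_{B \ A}` is independent of the `𝓕_A`-measurable variable and can be dropped. So if
`i ∈ J \ M`, the terms of `E[W_J | 𝓕_M] = ∑_{L ⊆ J} ± E[W | 𝓕_{L ∩ M}]` cancel in pairs
`L`, `insert i L`, and `E[W_J | 𝓕_M] = 0`. For `i ∈ (J \ K) \ L` take `M = L ∪ K`: then `V_K` is
`𝓕_M`-measurable and `E[W_J V_K | 𝓕_L] = E[E[W_J | 𝓕_M] V_K | 𝓕_L] = 0`. -/

section PiSystem

variable {Ω : Type*}

theorem IsPiSystem.image2_inter {C D : Set (Set Ω)} (hC : IsPiSystem C) (hD : IsPiSystem D) :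
    IsPiSystem (Set.image2 (· ∩ ·) C D) := by
  rintro _ ⟨s₁, hs₁, t₁, ht₁, rfl⟩ _ ⟨s₂, hs₂, t₂, ht₂, rfl⟩ hst
  rw [Set.inter_inter_inter_comm] at hst ⊢
  exact Set.mem_image2_of_mem (hC _ hs₁ _ hs₂ (hst.mono Set.inter_subset_left))
    (hD _ ht₁ _ ht₂ (hst.mono Set.inter_subset_right))

theorem MeasurableSpace.sup_eq_generateFrom_image2_inter (m₁ m₂ : MeasurableSpace Ω) :
    m₁ ⊔ m₂ = MeasurableSpace.generateFrom
      (Set.image2 (· ∩ ·) {s | MeasurableSet[m₁] s} {s | MeasurableSet[m₂] s}) := by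
  refine le_antisymm (sup_le (fun s hs => ?_) (fun s hs => ?_))
    (MeasurableSpace.generateFrom_le ?_)
  · exact MeasurableSpace.measurableSet_generateFrom ⟨s, hs, Set.univ, .univ, Set.inter_univ s⟩
  · exact MeasurableSpace.measurableSet_generateFrom ⟨Set.univ, .univ, s, hs, Set.univ_inter s⟩
  · rintro _ ⟨s, hs, t, ht, rfl⟩
    exact (le_sup_left (b := m₂) s hs).inter (le_sup_right (a := m₁) t ht)

end PiSystem

namespace MeasureTheory

variable {Ω F : Type*} [NormedAddCommGroup F] [NormedSpace ℝ F] {m m₁ m₂ m₃ : MeasurableSpace Ω}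
  [mΩ : MeasurableSpace Ω] {μ : Measure Ω}

theorem setIntegral_eq_setIntegral_of_isPiSystem {s : Set (Set Ω)} {f g : Ω → F} (hm : m ≤ mΩ)
    (h_eq : m = MeasurableSpace.generateFrom s) (h_inter : IsPiSystem s)
    (hf : Integrable f μ) (hg : Integrable g μ)
    (basic : ∀ t ∈ s, ∫ x in t, f x ∂μ = ∫ x in t, g x ∂μ)
    (h_univ : ∫ x, f x ∂μ = ∫ x, g x ∂μ) :
    ∀ t, MeasurableSet[m] t → ∫ x in t, f x ∂μ = ∫ x in t, g x ∂μ := by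
  refine MeasurableSpace.induction_on_inter h_eq h_inter (by simp) basic ?_ ?_
  · intro t ht h
    rw [setIntegral_compl (hm t ht) hf, setIntegral_compl (hm t ht) hg, h, h_univ]
  · intro t htd htm h
    rw [integral_iUnion (fun i => hm _ (htm i)) htd hf.integrableOn,
      integral_iUnion (fun i => hm _ (htm i)) htd hg.integrableOn]
    exact tsum_congr h

variable [CompleteSpace F] [IsFiniteMeasure μ]

theorem setIntegral_eq_measureReal_smul_integral_of_indep {f : Ω → F} (hm₁ : m₁ ≤ mΩ)
    (hm₂ : m₂ ≤ mΩ) (hind : Indep m₁ m₂ μ) (hf : Integrable f μ) (hfm : StronglyMeasurable[m₁] f)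
    {t : Set Ω} (ht : MeasurableSet[m₂] t) :
    ∫ x in t, f x ∂μ = μ.real t • ∫ x, f x ∂μ := by
  rw [← setIntegral_condExp hm₂ hf ht, ← setIntegral_const]
  exact setIntegral_congr_ae (hm₂ t ht)
    ((condExp_indep_eq hm₁ hm₂ hfm hind).mono fun x hx _ => hx)

theorem condExp_sup_eq_of_indep {f : Ω → F} (hm₁ : m₁ ≤ mΩ) (h₂₁ : m₂ ≤ m₁) (hm₃ : m₃ ≤ mΩ)
    (hind : Indep m₁ m₃ μ) (hfm : StronglyMeasurable[m₁] f) :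
    μ[f | m₂ ⊔ m₃] =ᵐ[μ] μ[f | m₂] := by
  by_cases hf : Integrable f μ
  swap
  · rw [condExp_of_not_integrable hf, condExp_of_not_integrable hf]
  have hm₂ : m₂ ≤ mΩ := h₂₁.trans hm₁
  have hm₂₃ : m₂ ⊔ m₃ ≤ mΩ := sup_le hm₂ hm₃
  refine (ae_eq_condExp_of_forall_setIntegral_eq hm₂₃ hf
    (fun _ _ _ => integrable_condExp.integrableOn) (fun t ht _ => ?_)
    (stronglyMeasurable_condExp.mono (le_sup_left : m₂ ≤ m₂ ⊔ m₃)).aestronglyMeasurable).symm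
  refine setIntegral_eq_setIntegral_of_isPiSystem hm₂₃
    (MeasurableSpace.sup_eq_generateFrom_image2_inter m₂ m₃)
    (.image2_inter (@MeasurableSpace.isPiSystem_measurableSet Ω m₂)
      (@MeasurableSpace.isPiSystem_measurableSet Ω m₃))
    integrable_condExp hf ?_ (integral_condExp hm₂) t ht
  rintro _ ⟨s, hs, u, hu, rfl⟩
  dsimp only
  -- on `s ∩ u` both integrals factor as `μ.real u • ∫ over s`, as `u` is independent of `m₁`
  have hs' : MeasurableSet s := hm₂ s hs
  rw [Set.inter_comm, ← setIntegral_indicator hs', ← setIntegral_indicator hs',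
    setIntegral_eq_measureReal_smul_integral_of_indep hm₁ hm₃ hind
      (integrable_condExp.indicator hs') ((stronglyMeasurable_condExp.indicator hs).mono h₂₁) hu,
    setIntegral_eq_measureReal_smul_integral_of_indep hm₁ hm₃ hind (hf.indicator hs')
      (hfm.indicator (h₂₁ s hs)) hu,
    integral_indicator hs', integral_indicator hs', setIntegral_condExp hm₂ hf hs]

end MeasureTheory

section SigmaGen

variable {Ω : Type*} [mΩ : MeasurableSpace Ω] {n : ℕ} {E : Fin n → Type*}
  [∀ i, MeasurableSpace (E i)] {X : ∀ i, Ω → E i}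

theorem sigmaGen_le (hX : ∀ i, Measurable (X i)) (A : Finset (Fin n)) : sigmaGen X A ≤ mΩ :=
  iSup₂_le fun i _ => (hX i).comap_le

omit mΩ in
theorem sigmaGen_mono {A B : Finset (Fin n)} (h : A ⊆ B) : sigmaGen X A ≤ sigmaGen X B :=
  biSup_mono fun _ hi => h hi

omit mΩ in
theorem sigmaGen_union (A B : Finset (Fin n)) :
    sigmaGen X (A ∪ B) = sigmaGen X A ⊔ sigmaGen X B :=
  Finset.iSup_union

theorem indep_sigmaGen_of_disjoint {μ : Measure Ω} (hX : ∀ i, Measurable (X i))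
    (hindep : iIndepFun X μ) {A B : Finset (Fin n)} (h : Disjoint A B) :
    Indep (sigmaGen X A) (sigmaGen X B) μ := by
  simpa only [sigmaGen, Finset.mem_coe] using
    indep_iSup_of_disjoint (fun i => (hX i).comap_le) hindep (Finset.disjoint_coe.2 h)

variable {μ : Measure Ω} [IsFiniteMeasure μ]

theorem condExp_sigmaGen_eq_inter (hX : ∀ i, Measurable (X i)) (hindep : iIndepFun X μ)
    {A B : Finset (Fin n)} {g : Ω → ℝ} (hg : StronglyMeasurable[sigmaGen X A] g) :
    μ[g | sigmaGen X B] =ᵐ[μ] μ[g | sigmaGen X (A ∩ B)] := by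
  have hB : sigmaGen X B = sigmaGen X (A ∩ B) ⊔ sigmaGen X (B \ A) := by
    rw [← sigmaGen_union, Finset.union_comm, Finset.inter_comm, Finset.sdiff_union_inter]
  rw [hB]
  exact condExp_sup_eq_of_indep (sigmaGen_le hX A) (sigmaGen_mono Finset.inter_subset_left)
    (sigmaGen_le hX _) (indep_sigmaGen_of_disjoint hX hindep Finset.disjoint_sdiff) hg

theorem condExp_condExp_sigmaGen (hX : ∀ i, Measurable (X i)) (hindep : iIndepFun X μ)
    (A B : Finset (Fin n)) (W : Ω → ℝ) :
    μ[μ[W | sigmaGen X A] | sigmaGen X B] =ᵐ[μ] μ[W | sigmaGen X (A ∩ B)] :=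
  (condExp_sigmaGen_eq_inter hX hindep stronglyMeasurable_condExp).trans
    (condExp_condExp_of_le (sigmaGen_mono Finset.inter_subset_left) (sigmaGen_le hX A))

end SigmaGen

theorem Finset.sum_powerset_neg_one_pow_card_sub_smul_eq_zero {α R M : Type*} [DecidableEq α]
    [Ring R] [AddCommGroup M] [Module R M] {J : Finset α} {i : α} (hi : i ∈ J)
    (f : Finset α → M) (hf : ∀ L, f (insert i L) = f L) :
    ∑ L ∈ J.powerset, ((-1 : R) ^ (J.card - L.card)) • f L = 0 := by
  rw [← Finset.insert_erase hi, Finset.sum_powerset_insert (Finset.notMem_erase i J),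
    ← Finset.sum_add_distrib]
  refine Finset.sum_eq_zero fun L hL => ?_
  have hiL : i ∉ L := fun h => Finset.notMem_erase i J (Finset.mem_powerset.1 hL h)
  have hLcard : L.card ≤ (J.erase i).card := Finset.card_le_card (Finset.mem_powerset.1 hL)
  rw [hf, Finset.card_insert_of_notMem hiL,
    Finset.card_insert_of_notMem (Finset.notMem_erase i J), Nat.add_sub_add_right,
    Nat.sub_add_comm hLcard, pow_succ, mul_neg_one, neg_smul, neg_add_cancel]

section Hoeffding

variable {Ω : Type*} [MeasurableSpace Ω] {μ : Measure Ω} {n : ℕ} {E : Fin n → Type*}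
  [∀ i, MeasurableSpace (E i)] {X : ∀ i, Ω → E i}

theorem stronglyMeasurable_hoeff (W : Ω → ℝ) (J : Finset (Fin n)) :
    StronglyMeasurable[sigmaGen X J] (hoeff μ X W J) :=
  Finset.stronglyMeasurable_sum _ fun _ hL =>
    (stronglyMeasurable_condExp.mono (sigmaGen_mono (Finset.mem_powerset.1 hL))).const_smul _

theorem integrable_hoeff (W : Ω → ℝ) (J : Finset (Fin n)) : Integrable (hoeff μ X W J) μ :=
  integrable_finsetSum' _ fun _ _ => integrable_condExp.smul _

variable [IsFiniteMeasure μ]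

theorem condExp_hoeff_eq_zero (hX : ∀ i, Measurable (X i)) (hindep : iIndepFun X μ)
    (W : Ω → ℝ) {J M : Finset (Fin n)} {i : Fin n} (hiJ : i ∈ J) (hiM : i ∉ M) :
    μ[hoeff μ X W J | sigmaGen X M] =ᵐ[μ] 0 := by
  calc μ[hoeff μ X W J | sigmaGen X M]
      =ᵐ[μ] ∑ L ∈ J.powerset,
        μ[((-1 : ℝ) ^ (J.card - L.card)) • μ[W | sigmaGen X L] | sigmaGen X M] :=
        condExp_finsetSum (fun _ _ => integrable_condExp.smul _) _
    _ =ᵐ[μ] ∑ L ∈ J.powerset, ((-1 : ℝ) ^ (J.card - L.card)) • μ[W | sigmaGen X (L ∩ M)] :=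
        eventuallyEq_sum fun L _ => (condExp_smul _ _ _).trans
          ((condExp_condExp_sigmaGen hX hindep L M W).const_smul _)
    _ = 0 := Finset.sum_powerset_neg_one_pow_card_sub_smul_eq_zero hiJ _
        fun _ => by rw [Finset.insert_inter_of_notMem hiM]

theorem condExp_hoeff_mul_hoeff_eq_zero (hX : ∀ i, Measurable (X i)) (hindep : iIndepFun X μ)
    (W V : Ω → ℝ) {J K L : Finset (Fin n)} {i : Fin n} (hiJ : i ∈ J) (hiK : i ∉ K)
    (hiL : i ∉ L) :
    μ[hoeff μ X W J * hoeff μ X V K | sigmaGen X L] =ᵐ[μ] 0 := by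
  by_cases hint : Integrable (hoeff μ X W J * hoeff μ X V K) μ
  swap
  · rw [condExp_of_not_integrable hint]
  have hiLK : i ∉ L ∪ K := by simp [hiL, hiK]
  calc μ[hoeff μ X W J * hoeff μ X V K | sigmaGen X L]
      =ᵐ[μ] μ[μ[hoeff μ X W J * hoeff μ X V K | sigmaGen X (L ∪ K)] | sigmaGen X L] :=
        (condExp_condExp_of_le (sigmaGen_mono Finset.subset_union_left) (sigmaGen_le hX _)).symm
    _ =ᵐ[μ] μ[μ[hoeff μ X W J | sigmaGen X (L ∪ K)] * hoeff μ X V K | sigmaGen X L] :=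
        condExp_congr_ae (condExp_mul_of_stronglyMeasurable_right
          ((stronglyMeasurable_hoeff V K).mono (sigmaGen_mono Finset.subset_union_right)) hint
          (integrable_hoeff W J))
    _ =ᵐ[μ] μ[0 * hoeff μ X V K | sigmaGen X L] :=
        condExp_congr_ae ((condExp_hoeff_eq_zero hX hindep W hiJ hiLK).mul_right)
    _ = 0 := by rw [zero_mul, condExp_zero]

end Hoeffding

theorem condexp_product_hoeffding_eq_zero_general
    {Ω : Type*} [m0 : MeasurableSpace Ω] (μ : Measure Ω) [IsProbabilityMeasure μ]
    {n : ℕ} {E : Fin n → Type*} [∀ i, MeasurableSpace (E i)]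
    (X : ∀ i, Ω → E i) (hX : ∀ i, Measurable (X i))
    (hindep : iIndepFun X μ)
    (W V : Ω → ℝ)
    (J K : Finset (Fin n))
    (L : Finset (Fin n)) (hL : ¬ ((J \ K) ∪ (K \ J)) ⊆ L) :
    μ[(fun ω => hoeff μ X W J ω * hoeff μ X V K ω) | sigmaGen X L] =ᵐ[μ] 0 := by
  obtain ⟨i, hi, hiL⟩ := Finset.not_subset.1 hL
  rcases Finset.mem_union.1 hi with hiJK | hiKJ
  · obtain ⟨hiJ, hiK⟩ := Finset.mem_sdiff.1 hiJK
    exact condExp_hoeff_mul_hoeff_eq_zero hX hindep W V hiJ hiK hiL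
  · obtain ⟨hiK, hiJ⟩ := Finset.mem_sdiff.1 hiKJ
    rw [show (fun ω => hoeff μ X W J ω * hoeff μ X V K ω) = hoeff μ X V K * hoeff μ X W J from
      mul_comm _ _]
    exact condExp_hoeff_mul_hoeff_eq_zero hX hindep V W hiK hiJ hiL

theorem condexp_product_hoeffding_eq_zero
    {Ω : Type*} [m0 : MeasurableSpace Ω] (μ : Measure Ω) [IsProbabilityMeasure μ]
    {n : ℕ} {E : Fin n → Type*} [∀ i, MeasurableSpace (E i)]
    (X : ∀ i, Ω → E i) (hX : ∀ i, Measurable (X i))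
    (hindep : iIndepFun X μ)
    (p q : ℕ) (hp : 1 ≤ p) (hpn : p ≤ n) (hq : 1 ≤ q) (hqn : q ≤ n)
    (W V : Ω → ℝ) (hW2 : MemLp W 2 μ) (hV2 : MemLp V 2 μ)
    (hWdeg : IsDegenUStat μ X W p) (hVdeg : IsDegenUStat μ X V q)
    (J K : Finset (Fin n)) (hJ : J ∈ DD n p) (hK : K ∈ DD n q)
    (L : Finset (Fin n)) (hL : ¬ ((J \ K) ∪ (K \ J)) ⊆ L) :
    μ[(fun ω => hoeff μ X W J ω * hoeff μ X V K ω) | sigmaGen X L] =ᵐ[μ] 0 :=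
  condexp_product_hoeffding_eq_zero_general (m0 := m0) μ X hX hindep W V J K L hL
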